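/- Let 𝔸 = (A, ≤, →, Σ) be an implicative algebra with |A| < κ for a strongly inaccessible cardinal κ, and let W, ∈_W, =_W be as defined below. Then there exists s₁ ∈ Σ such that s₁ ≤ ⨅_{α,β,γ∈W} (((α =_W β) × (γ ∈_W α)) → (γ ∈_W β)). -/

import Mathlib

universe u

/-- An implicative algebra `𝔸 = (A, ≤, →, Σ)`:  a complete lattice `(A, ≤)` together with an
implication `imp` which is antitone in its first argument, monotone in its second argument and
turns infima in the second argument into infima, and a separator `Sig ⊆ A` which is upward
closed, closed under modus ponens and contains the combinators `K` and `S`. -/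
structure ImplicativeAlgebra (A : Type u) [CompleteLattice A] where
  imp : A → A → A
  imp_antitone : ∀ ⦃a a' b : A⦄, a ≤ a' → imp a' b ≤ imp a b
  imp_monotone : ∀ ⦃a b b' : A⦄, b ≤ b' → imp a b ≤ imp a b'
  imp_sInf : ∀ (a : A) (S : Set A), imp a (sInf S) = ⨅ b ∈ S, imp a b
  Sig : Set A
  Sig_upward : ∀ ⦃a b : A⦄, a ∈ Sig → a ≤ b → b ∈ Sig
  Sig_mp : ∀ ⦃a b : A⦄, imp a b ∈ Sig → a ∈ Sig → b ∈ Sig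
  Sig_K : (⨅ a : A, ⨅ b : A, imp a (imp b a)) ∈ Sig
  Sig_S : (⨅ a : A, ⨅ b : A, ⨅ c : A,
      imp (imp a (imp b c)) (imp (imp a b) (imp a c))) ∈ Sig

namespace ImplicativeAlgebra

variable {A : Type u} [CompleteLattice A]

/-- `a × b := ⨅ x, ((a → (b → x)) → x)`. -/
def times (IA : ImplicativeAlgebra A) (a b : A) : A :=
  ⨅ x : A, IA.imp (IA.imp a (IA.imp b x)) x

/-- `a + b := ⨅ x, ((a → x) → ((b → x) → x))`. -/
def plus (IA : ImplicativeAlgebra A) (a b : A) : A :=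
  ⨅ x : A, IA.imp (IA.imp a x) (IA.imp (IA.imp b x) x)

/-- `∃⃗_{i} f i := ⨅ x, ((⨅ i, (f i → x)) → x)`.  (`∀⃗` is just `⨅`.) -/
def aex (IA : ImplicativeAlgebra A) {ι : Sort*} (f : ι → A) : A :=
  ⨅ x : A, IA.imp (⨅ i, IA.imp (f i) x) x

/-- `φ ⊢_{Σ[I]} ψ` iff `⨅ i, (φ i → ψ i) ∈ Σ`. -/
def SigLe (IA : ImplicativeAlgebra A) {ι : Sort*} (f g : ι → A) : Prop :=
  (⨅ i, IA.imp (f i) (g i)) ∈ IA.Sig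

/-- `φ ≡_{Σ[I]} ψ` iff `φ ⊢_{Σ[I]} ψ` and `ψ ⊢_{Σ[I]} φ`. -/
def SigEquiv (IA : ImplicativeAlgebra A) {ι : Sort*} (f g : ι → A) : Prop :=
  IA.SigLe f g ∧ IA.SigLe g f

end ImplicativeAlgebra

/-- Pre-elements of the cumulative hierarchy of partial functions valued in `A`:
an element is an `A`-labelled family of previously constructed elements, i.e. a partial
function (presented by a family indexed by its domain) from earlier elements to `A`. -/
inductive PreW (A : Type u) : Type (u + 1)
  | mk (ι : Type u) (fam : ι → PreW A) (val : ι → A)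

namespace PreW

variable {A : Type u}

/-- The (index type of the) domain of a partial function. -/
def dom : PreW A → Type u
  | ⟨ι, _, _⟩ => ι

/-- The family of elements of the domain. -/
def fam : (w : PreW A) → w.dom → PreW A
  | ⟨_, f, _⟩ => f

/-- The values in `A` of the partial function. -/
def val : (w : PreW A) → w.dom → A
  | ⟨_, _, v⟩ => v

/-- `w` is hereditarily of size `< κ`:  this carves out exactly the elements of the stage
`W_κ` of the hierarchy (for `κ` inaccessible). -/
def HSmall (κ : Cardinal.{u}) : PreW A → Prop
  | ⟨ι, f, _⟩ => Cardinal.mk ι < κ ∧ ∀ i, HSmall κ (f i)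

theorem HSmall.fam {κ : Cardinal.{u}} :
    ∀ {w : PreW A}, w.HSmall κ → ∀ i : w.dom, (w.fam i).HSmall κ
  | ⟨_, _, _⟩, h, i => h.2 i

/-- The rank of an element of the hierarchy. -/
noncomputable def rank : PreW A → Ordinal.{u}
  | ⟨_, f, _⟩ => ⨆ i, Order.succ (rank (f i))

theorem rank_lt_mk {ι : Type u} (f : ι → PreW A) (v : ι → A) (i : ι) :
    (f i).rank < (PreW.mk ι f v).rank := by
  have h : Order.succ (f i).rank ≤ ⨆ j, Order.succ (f j).rank := Ordinal.le_iSup _ i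
  have : (f i).rank < ⨆ j, Order.succ (f j).rank :=
    lt_of_lt_of_le (Order.lt_succ _) h
  simpa [rank] using this

end PreW

namespace ImplicativeAlgebra

variable {A : Type u} [CompleteLattice A]

/-- `α =_W β`, defined by recursion on rank:
`α =_W β := (α ⊆_W β) × (β ⊆_W α)` where
`α ⊆_W β := ∀⃗_{t ∈ dom α} (α t → (fam α t ∈_W β))` and
`γ ∈_W β := ∃⃗_{s ∈ dom β} (β s × (fam β s =_W γ))`. -/
noncomputable def eqW (IA : ImplicativeAlgebra A) : PreW A → PreW A → A
  | ⟨ι₁, f₁, v₁⟩, ⟨ι₂, f₂, v₂⟩ =>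
    IA.times
      (⨅ t : ι₁, IA.imp (v₁ t)
        (IA.aex fun s : ι₂ => IA.times (v₂ s) (IA.eqW (f₂ s) (f₁ t))))
      (⨅ t : ι₂, IA.imp (v₂ t)
        (IA.aex fun s : ι₁ => IA.times (v₁ s) (IA.eqW (f₁ s) (f₂ t))))
termination_by α β => max α.rank β.rank
decreasing_by
  · exact max_lt (lt_of_lt_of_le (PreW.rank_lt_mk f₂ v₂ s) (le_max_right _ _))
      (lt_of_lt_of_le (PreW.rank_lt_mk f₁ v₁ t) (le_max_left _ _))
  · exact max_lt (lt_of_lt_of_le (PreW.rank_lt_mk f₁ v₁ s) (le_max_left _ _))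
      (lt_of_lt_of_le (PreW.rank_lt_mk f₂ v₂ t) (le_max_right _ _))

/-- `α ∈_W β := ∃⃗_{s ∈ dom β} (β s × (fam β s =_W α))`. -/
noncomputable def memW (IA : ImplicativeAlgebra A) (α β : PreW A) : A :=
  IA.aex fun s : β.dom => IA.times (β.val s) (IA.eqW (β.fam s) α)

/-- `α ⊆_W β := ∀⃗_{t ∈ dom α} (α t → (fam α t ∈_W β))`. -/
noncomputable def subW (IA : ImplicativeAlgebra A) (α β : PreW A) : A :=
  ⨅ t : α.dom, IA.imp (α.val t) (IA.memW (α.fam t) β)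

end ImplicativeAlgebra

/-- The stage `W = W_κ` of the hierarchy: all hereditarily `< κ`-sized elements. -/
def WSet (A : Type u) (κ : Cardinal.{u}) : Type (u + 1) :=
  {w : PreW A // w.HSmall κ}

/-- An element of the domain of `w ∈ W`, as an element of `W`. -/
def WSet.fam {A : Type u} {κ : Cardinal.{u}} (w : WSet A κ) (i : w.1.dom) : WSet A κ :=
  ⟨w.1.fam i, w.2.fam i⟩

/-- Formulas (in context of length `n`) of the first-order language of set theory, with
(de Bruijn-style) variables `Fin n`, binary predicates `∈` and `=`, connectives `⊥`, `∧`, `∨`,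
`→` and quantifiers `∃`, `∀` (binding the last variable of the enlarged context). -/
inductive SetFormula : ℕ → Type
  | bot {n : ℕ} : SetFormula n
  | mem {n : ℕ} (i j : Fin n) : SetFormula n
  | eq {n : ℕ} (i j : Fin n) : SetFormula n
  | and {n : ℕ} (φ ψ : SetFormula n) : SetFormula n
  | or {n : ℕ} (φ ψ : SetFormula n) : SetFormula n
  | imp {n : ℕ} (φ ψ : SetFormula n) : SetFormula n
  | ex {n : ℕ} (φ : SetFormula (n + 1)) : SetFormula n
  | all {n : ℕ} (φ : SetFormula (n + 1)) : SetFormula n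

namespace SetFormula

/-- Renaming of variables (since the only terms of the language of set theory are variables,
substitution is a special case). -/
def rename : {n m : ℕ} → (Fin n → Fin m) → SetFormula n → SetFormula m
  | _, _, _, .bot => .bot
  | _, _, f, .mem i j => .mem (f i) (f j)
  | _, _, f, .eq i j => .eq (f i) (f j)
  | _, _, f, .and φ ψ => .and (φ.rename f) (ψ.rename f)
  | _, _, f, .or φ ψ => .or (φ.rename f) (ψ.rename f)
  | _, _, f, .imp φ ψ => .imp (φ.rename f) (ψ.rename f)
  | _, _, f, .ex φ => .ex (φ.rename (Fin.snoc (Fin.castSucc ∘ f) (Fin.last _)))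
  | _, _, f, .all φ => .all (φ.rename (Fin.snoc (Fin.castSucc ∘ f) (Fin.last _)))

/-- Universal closure `∀x₁ … ∀xₙ φ` of a formula in context of length `n`. -/
def allClose : {n : ℕ} → SetFormula n → SetFormula 0
  | 0, φ => φ
  | _ + 1, φ => allClose (.all φ)

end SetFormula

namespace ImplicativeAlgebra

variable {A : Type u} [CompleteLattice A]

/-- The interpretation `‖φ[x₁,…,xₙ]‖ : Wⁿ → A` of a formula in context, by recursion on the
structure of `φ`:  atomic formulas are interpreted by `∈_W` and `=_W`, `∧` by `×`, `∨` by `+`,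
`→` by `→`, `∃` by `∃⃗` over `W` and `∀` by `∀⃗` (i.e. `⨅`) over `W`. -/
noncomputable def interp (IA : ImplicativeAlgebra A) (κ : Cardinal.{u}) :
    {n : ℕ} → SetFormula n → (Fin n → WSet A κ) → A
  | _, .bot, _ => ⊥
  | _, .mem i j, v => IA.memW (v i).1 (v j).1
  | _, .eq i j, v => IA.eqW (v i).1 (v j).1
  | _, .and φ ψ, v => IA.times (IA.interp κ φ v) (IA.interp κ ψ v)
  | _, .or φ ψ, v => IA.plus (IA.interp κ φ v) (IA.interp κ ψ v)
  | _, .imp φ ψ, v => IA.imp (IA.interp κ φ v) (IA.interp κ ψ v)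
  | _, .ex φ, v => IA.aex fun β : WSet A κ => IA.interp κ φ (Fin.snoc v β)
  | _, .all φ, v => ⨅ β : WSet A κ, IA.interp κ φ (Fin.snoc v β)

end ImplicativeAlgebra


/-! The bound is realized by a closed λ-term, compiled to `S`, `K` by bracket abstraction so
that it lies in `Σ`. From `γ ∈_W α` one extracts an index `s` of `α` with `α s` and
`α_s =_W γ`; the first half of `α =_W β` turns `α s` into an index `u` of `β` with `β u` and
`β_u =_W α_s`, and transitivity of `=_W` gives `β_u =_W γ`, hence `γ ∈_W β`. Transitivity of
`=_W` holds by recursion on rank and is realized by a single element of `Σ`: the fixed point,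
under Turing's combinator, of the step deriving it from transitivity at lower ranks. -/

theorem PreW.rank_fam_lt {A : Type u} : ∀ (w : PreW A) (i : w.dom), (w.fam i).rank < w.rank
  | ⟨_, f, v⟩, i => PreW.rank_lt_mk f v i

namespace ImplicativeAlgebra

variable {A : Type u} [CompleteLattice A] (IA : ImplicativeAlgebra A)

/-- Application, the left adjoint of implication (`app_le_iff`). -/
def app (a b : A) : A := sInf {c | a ≤ IA.imp b c}

variable {IA}

theorem app_le_iff {a b c : A} : IA.app a b ≤ c ↔ a ≤ IA.imp b c := by
  refine ⟨fun h => ?_, fun h => sInf_le h⟩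
  have hab : a ≤ IA.imp b (IA.app a b) := by
    rw [app, IA.imp_sInf]
    exact le_iInf₂ fun _ hc => hc
  exact hab.trans (IA.imp_monotone h)

theorem app_le {a b c x : A} (h : a ≤ IA.imp b c) (hx : x ≤ b) : IA.app a x ≤ c :=
  app_le_iff.2 (h.trans (IA.imp_antitone hx))

theorem app_mono {a a' b b' : A} (ha : a ≤ a') (hb : b ≤ b') : IA.app a b ≤ IA.app a' b' :=
  app_le (ha.trans (app_le_iff.1 le_rfl)) hb

theorem app_app_le {m a b c x y : A} (hm : m ≤ IA.imp a (IA.imp b c)) (hx : x ≤ a)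
    (hy : y ≤ b) : IA.app (IA.app m x) y ≤ c :=
  app_le (app_le hm hx) hy

theorem app_mem {a b : A} (ha : a ∈ IA.Sig) (hb : b ∈ IA.Sig) : IA.app a b ∈ IA.Sig :=
  IA.Sig_mp (IA.Sig_upward ha (app_le_iff.1 le_rfl)) hb

theorem app_le_of_le_aex {ι : Sort*} {f : ι → A} {p g c : A} (hp : p ≤ IA.aex f)
    (hg : ∀ i, g ≤ IA.imp (f i) c) : IA.app p g ≤ c :=
  app_le (hp.trans (iInf_le _ c)) (le_iInf hg)

variable (IA)

def K : A := ⨅ a : A, ⨅ b : A, IA.imp a (IA.imp b a)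

def S : A := ⨅ a : A, ⨅ b : A, ⨅ c : A,
  IA.imp (IA.imp a (IA.imp b c)) (IA.imp (IA.imp a b) (IA.imp a c))

def I : A := IA.app (IA.app IA.S IA.K) IA.K

variable {IA}

theorem app_app_K_le (a b : A) : IA.app (IA.app IA.K a) b ≤ a :=
  app_app_le (iInf_le_of_le a (iInf_le _ b)) le_rfl le_rfl

theorem app_app_app_S_le (x y z : A) :
    IA.app (IA.app (IA.app IA.S x) y) z ≤ IA.app (IA.app x z) (IA.app y z) := by
  have hx : x ≤ IA.imp z (IA.imp (IA.app y z) (IA.app (IA.app x z) (IA.app y z))) :=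
    app_le_iff.1 (app_le_iff.1 le_rfl)
  have hy : y ≤ IA.imp z (IA.app y z) := app_le_iff.1 le_rfl
  exact app_le (app_app_le (iInf_le_of_le z (iInf_le_of_le _ (iInf_le _ _))) hx hy) le_rfl

theorem I_le (a : A) : IA.I ≤ IA.imp a a :=
  app_le_iff.1 ((app_app_app_S_le _ _ _).trans (app_app_K_le a _))

theorem app_K_le_of_le_times {p a b : A} (h : p ≤ IA.times a b) : IA.app p IA.K ≤ a :=
  app_le (h.trans (iInf_le _ a)) (iInf_le_of_le a (iInf_le _ b))

theorem app_KI_le_of_le_times {p a b : A} (h : p ≤ IA.times a b) :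
    IA.app p (IA.app IA.K IA.I) ≤ b :=
  app_le (h.trans (iInf_le _ b)) (app_le_iff.1 ((app_app_K_le _ a).trans (I_le b)))

theorem eqW_eq_times_subW (x y : PreW A) :
    IA.eqW x y = IA.times (IA.subW x y) (IA.subW y x) := by
  cases x; cases y; rw [eqW]; rfl

end ImplicativeAlgebra

/-- Combinatory terms over the variables `Fin n`; the variable `Fin.last n` is the most recently
bound one. -/
inductive SKTerm (n : ℕ) : Type
  | var : Fin n → SKTerm n
  | K : SKTerm n
  | S : SKTerm n
  | ap : SKTerm n → SKTerm n → SKTerm n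

namespace SKTerm

local infixl:100 " ⬝ " => SKTerm.ap

def wk {n : ℕ} : SKTerm n → SKTerm (n + 1)
  | var i => var i.castSucc
  | K => K
  | S => S
  | t ⬝ u => t.wk ⬝ u.wk

/-- Bracket abstraction of the last variable. -/
def lam {n : ℕ} : SKTerm (n + 1) → SKTerm n
  | var i => Fin.lastCases (S ⬝ K ⬝ K) (fun j => K ⬝ var j) i
  | K => K ⬝ K
  | S => K ⬝ S
  | t ⬝ u => S ⬝ t.lam ⬝ u.lam

-- De Bruijn indices on top of the levels `Fin n`.

abbrev v0 {n : ℕ} : SKTerm (n + 1) := var (Fin.last n)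

abbrev v1 {n : ℕ} : SKTerm (n + 2) := var (Fin.last n).castSucc

abbrev v2 {n : ℕ} : SKTerm (n + 3) := var (Fin.last n).castSucc.castSucc

def fst {n : ℕ} (t : SKTerm n) : SKTerm n := t ⬝ K

def snd {n : ℕ} (t : SKTerm n) : SKTerm n := t ⬝ (K ⬝ (S ⬝ K ⬝ K))

def pair {n : ℕ} (t u : SKTerm n) : SKTerm n := lam (v0 ⬝ t.wk ⬝ u.wk)

def pack {n : ℕ} (t : SKTerm n) : SKTerm n := lam (v0 ⬝ t.wk)

end SKTerm

namespace ImplicativeAlgebra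

variable {A : Type u} [CompleteLattice A] {IA : ImplicativeAlgebra A}

open SKTerm

def eval (IA : ImplicativeAlgebra A) {n : ℕ} : SKTerm n → (Fin n → A) → A
  | .var i, env => env i
  | .K, _ => IA.K
  | .S, _ => IA.S
  | .ap t u, env => IA.app (IA.eval t env) (IA.eval u env)

theorem eval_mem {n : ℕ} (t : SKTerm n) {env : Fin n → A} (h : ∀ i, env i ∈ IA.Sig) :
    IA.eval t env ∈ IA.Sig := by
  induction t with
  | var i => exact h i
  | K => exact IA.Sig_K
  | S => exact IA.Sig_S
  | ap t u iht ihu => exact app_mem iht ihu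

@[simp]
theorem eval_wk {n : ℕ} (t : SKTerm n) (env : Fin n → A) (a : A) :
    IA.eval t.wk (Fin.snoc env a) = IA.eval t env := by
  induction t <;> simp [wk, eval, *]

theorem app_eval_lam_le {n : ℕ} (t : SKTerm (n + 1)) (env : Fin n → A) (a : A) :
    IA.app (IA.eval t.lam env) a ≤ IA.eval t (Fin.snoc env a) := by
  induction t with
  | var i =>
    induction i using Fin.lastCases with
    | last =>
      simp only [lam, Fin.lastCases_last, eval, Fin.snoc_last]
      exact (app_app_app_S_le _ _ _).trans (app_app_K_le a _)
    | cast j =>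
      simp only [lam, Fin.lastCases_castSucc, eval, Fin.snoc_castSucc]
      exact app_app_K_le _ _
  | K | S => exact app_app_K_le _ _
  | ap t u iht ihu => exact (app_app_app_S_le _ _ _).trans (app_mono iht ihu)

theorem eval_lam_le_imp {n : ℕ} {t : SKTerm (n + 1)} {env : Fin n → A} {a c : A}
    (h : IA.eval t (Fin.snoc env a) ≤ c) : IA.eval t.lam env ≤ IA.imp a c :=
  app_le_iff.1 ((app_eval_lam_le t env a).trans h)

variable {n : ℕ} {t u : SKTerm n} {env : Fin n → A} {a b : A}

@[simp]
theorem eval_fst : IA.eval t.fst env = IA.app (IA.eval t env) IA.K := rfl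

@[simp]
theorem eval_snd : IA.eval t.snd env = IA.app (IA.eval t env) (IA.app IA.K IA.I) := rfl

theorem eval_pair_le (ht : IA.eval t env ≤ a) (hu : IA.eval u env ≤ b) :
    IA.eval (pair t u) env ≤ IA.times a b :=
  le_iInf fun _ => eval_lam_le_imp (by simpa [eval] using app_app_le le_rfl ht hu)

theorem eval_pack_le {ι : Sort*} {f : ι → A} (i : ι) (ht : IA.eval t env ≤ f i) :
    IA.eval (pack t) env ≤ IA.aex f :=
  le_iInf fun _ => eval_lam_le_imp (by simpa [eval] using app_le (iInf_le _ i) ht)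

end ImplicativeAlgebra

namespace SKTerm

local infixl:100 " ⬝ " => SKTerm.ap

/-- Half of Turing's fixed-point combinator `Θ = H H`, `H = λx f. f (x x f)`. -/
def turingHalf : SKTerm 0 := lam (lam (v0 ⬝ (v1 ⬝ v1 ⬝ v0)))

/-- Given realizers `r` of transitivity of `=_W` (at lower ranks), `q` of `y ⊆_W z` and `m` of
`x ∈_W y`, a realizer of `x ∈_W z`. -/
def memOfSub {n : ℕ} (r q m : SKTerm n) : SKTerm n :=
  m ⬝ lam (q.wk ⬝ fst v0 ⬝ lam (pack (pair (fst v0) (r.wk.wk ⬝ snd v0 ⬝ snd v1))))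

def subTrans {n : ℕ} (r p q : SKTerm n) : SKTerm n :=
  lam (memOfSub r.wk q.wk (p.wk ⬝ v0))

/-- `λ r e e'. ⟨subTrans r e.1 e'.1, subTrans r e'.2 e.2⟩`: transitivity of `=_W` from a
realizer `r` of it at lower ranks. -/
def eqTransStep : SKTerm 0 :=
  lam (lam (lam (pair (subTrans v2 (fst v1) (fst v0)) (subTrans v2 (snd v0) (snd v1)))))

def memCongr : SKTerm 0 := lam (lam (memOfSub v1 (fst (fst v0)) (snd v0)))

end SKTerm

namespace ImplicativeAlgebra

variable {A : Type u} [CompleteLattice A] {IA : ImplicativeAlgebra A}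

open SKTerm

variable (IA) in
def turing : A := IA.app (IA.eval turingHalf Fin.elim0) (IA.eval turingHalf Fin.elim0)

theorem turing_mem : IA.turing ∈ IA.Sig :=
  app_mem (eval_mem _ finZeroElim) (eval_mem _ finZeroElim)

theorem app_turing_le (f : A) : IA.app IA.turing f ≤ IA.app f (IA.app IA.turing f) :=
  (app_mono (app_eval_lam_le _ _ _) le_rfl).trans (app_eval_lam_le _ _ f)

variable {n : ℕ} {env : Fin n → A}

theorem eval_memOfSub_le {r q m : SKTerm n} {x y z : PreW A}
    (hr : ∀ s u, IA.eval r env ≤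
      IA.imp (IA.eqW (z.fam u) (y.fam s)) (IA.imp (IA.eqW (y.fam s) x) (IA.eqW (z.fam u) x)))
    (hq : IA.eval q env ≤ IA.subW y z) (hm : IA.eval m env ≤ IA.memW x y) :
    IA.eval (memOfSub r q m) env ≤ IA.memW x z := by
  refine app_le_of_le_aex hm fun s => eval_lam_le_imp ?_
  simp only [eval, eval_wk, eval_fst, Fin.snoc_last]
  refine app_le_of_le_aex (app_le (hq.trans (iInf_le _ s)) (app_K_le_of_le_times le_rfl))
    fun u => eval_lam_le_imp (eval_pack_le u (eval_pair_le ?_ ?_))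
  · simpa [eval] using app_K_le_of_le_times le_rfl
  · simpa [eval] using
      app_app_le (hr s u) (app_KI_le_of_le_times le_rfl) (app_KI_le_of_le_times le_rfl)

theorem eval_subTrans_le {r p q : SKTerm n} {x y z : PreW A}
    (hr : ∀ t s u, IA.eval r env ≤ IA.imp (IA.eqW (z.fam u) (y.fam s))
      (IA.imp (IA.eqW (y.fam s) (x.fam t)) (IA.eqW (z.fam u) (x.fam t))))
    (hp : IA.eval p env ≤ IA.subW x y) (hq : IA.eval q env ≤ IA.subW y z) :
    IA.eval (subTrans r p q) env ≤ IA.subW x z :=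
  le_iInf fun t => eval_lam_le_imp <| eval_memOfSub_le (by simpa using hr t) (by simpa using hq)
    (by simpa [eval] using app_le (hp.trans (iInf_le _ t)) le_rfl)

theorem app_eqTransStep_le {r : A} {x y z : PreW A}
    (hr : ∀ (a b c : PreW A), max a.rank (max b.rank c.rank) < max x.rank (max y.rank z.rank) →
      r ≤ IA.imp (IA.eqW a b) (IA.imp (IA.eqW b c) (IA.eqW a c))) :
    IA.app (IA.eval eqTransStep Fin.elim0) r ≤
      IA.imp (IA.eqW x y) (IA.imp (IA.eqW y z) (IA.eqW x z)) := by
  refine app_le (eval_lam_le_imp (eval_lam_le_imp (eval_lam_le_imp ?_))) le_rfl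
  have hxy := (eqW_eq_times_subW (IA := IA) x y).le
  have hyz := (eqW_eq_times_subW (IA := IA) y z).le
  refine (eval_pair_le (eval_subTrans_le (y := y) (fun t s u => ?_) ?_ ?_)
    (eval_subTrans_le (y := y) (fun t s u => ?_) ?_ ?_)).trans (eqW_eq_times_subW x z).ge
  all_goals simp only [eval, eval_fst, eval_snd, Fin.snoc_last, Fin.snoc_castSucc]
  · exact hr _ _ _ (by simp only [max_lt_iff]; simp [PreW.rank_fam_lt])
  · exact app_K_le_of_le_times hxy
  · exact app_K_le_of_le_times hyz
  · exact hr _ _ _ (by simp only [max_lt_iff]; simp [PreW.rank_fam_lt])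
  · exact app_KI_le_of_le_times hyz
  · exact app_KI_le_of_le_times hxy

variable (IA) in
def eqTransRealizer : A := IA.app IA.turing (IA.eval eqTransStep Fin.elim0)

theorem eqTransRealizer_mem : IA.eqTransRealizer ∈ IA.Sig :=
  app_mem turing_mem (eval_mem _ finZeroElim)

theorem eqTransRealizer_le (x y z : PreW A) :
    IA.eqTransRealizer ≤ IA.imp (IA.eqW x y) (IA.imp (IA.eqW y z) (IA.eqW x z)) :=
  (app_turing_le _).trans <| app_eqTransStep_le fun a b c _ => eqTransRealizer_le a b c
termination_by max x.rank (max y.rank z.rank)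
decreasing_by assumption

variable (IA) in
def memCongrRealizer : A := IA.app (IA.eval memCongr Fin.elim0) IA.eqTransRealizer

theorem memCongrRealizer_mem : IA.memCongrRealizer ∈ IA.Sig :=
  app_mem (eval_mem _ finZeroElim) eqTransRealizer_mem

theorem memCongrRealizer_le (α β γ : PreW A) :
    IA.memCongrRealizer ≤ IA.imp (IA.times (IA.eqW α β) (IA.memW γ α)) (IA.memW γ β) := by
  refine app_le (eval_lam_le_imp (eval_lam_le_imp (eval_memOfSub_le (y := α) ?_ ?_ ?_))) le_rfl
  all_goals simp only [eval, eval_fst, eval_snd, Fin.snoc_last, Fin.snoc_castSucc]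
  · exact fun s u => eqTransRealizer_le _ _ _
  · exact app_K_le_of_le_times (app_K_le_of_le_times le_rfl |>.trans (eqW_eq_times_subW α β).le)
  · exact app_KI_le_of_le_times le_rfl

end ImplicativeAlgebra

theorem stmt3_general {A : Type u} [CompleteLattice A] (IA : ImplicativeAlgebra A)
    (κ : Cardinal.{u}) :
    ∃ s₁ ∈ IA.Sig, s₁ ≤ ⨅ α : WSet A κ, ⨅ β : WSet A κ, ⨅ γ : WSet A κ,
      IA.imp (IA.times (IA.eqW α.1 β.1) (IA.memW γ.1 α.1)) (IA.memW γ.1 β.1) :=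
  ⟨IA.memCongrRealizer, ImplicativeAlgebra.memCongrRealizer_mem,
    le_iInf fun α => le_iInf fun β => le_iInf fun γ =>
      ImplicativeAlgebra.memCongrRealizer_le α.1 β.1 γ.1⟩

theorem stmt3 {A : Type u} [CompleteLattice A] (IA : ImplicativeAlgebra A)
    (κ : Cardinal.{u}) (hκ : κ.IsInaccessible) (hA : Cardinal.mk A < κ) :
    ∃ s₁ ∈ IA.Sig, s₁ ≤ ⨅ α : WSet A κ, ⨅ β : WSet A κ, ⨅ γ : WSet A κ,
      IA.imp (IA.times (IA.eqW α.1 β.1) (IA.memW γ.1 α.1)) (IA.memW γ.1 β.1) :=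
  stmt3_general IA κ
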